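/- arXiv:1205.0368 — 3 statements merged into one kernel-verified Lean document; each statement's English description precedes it below -/
import Mathlib

section
/- Fix ξ ∈ ℝ³, positive real parameters ε, δ and a time step Δt, and set H = εδ(α·ξ) + β and θ = Δt √(1+ε²δ²|ξ|²)/(εδ²). Then the matrix exponential of the Fourier-mode generator of the free-Dirac step of the splitting scheme is exp(−(iΔt/(εδ²)) • H) = cos(θ) • I₄ − i (sin(θ)/√(1+ε²δ²|ξ|²)) • H. -/
open Matrix Complex

/-- The three Dirac alpha matrices `α^k = [[0, σ^k],[σ^k, 0]]`. -/
noncomputable def alphaM : Fin 3 → Matrix (Fin 4) (Fin 4) ℂ :=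
  ![!![0,0,0,1; 0,0,1,0; 0,1,0,0; 1,0,0,0],
    !![0,0,0,-Complex.I; 0,0,Complex.I,0; 0,-Complex.I,0,0; Complex.I,0,0,0],
    !![0,0,1,0; 0,0,0,-1; 1,0,0,0; 0,-1,0,0]]

/-- The Dirac beta matrix `β = diag(I₂, −I₂)`. -/
noncomputable def betaM : Matrix (Fin 4) (Fin 4) ℂ :=
  !![1,0,0,0; 0,1,0,0; 0,0,-1,0; 0,0,0,-1]

/-- `α · a = Σ_k aₖ α^k` for a real 3-vector `a`. -/
noncomputable def alphaDot (a : Fin 3 → ℝ) : Matrix (Fin 4) (Fin 4) ℂ :=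
  ∑ k, (a k : ℂ) • alphaM k

/-- Squared Euclidean norm of a real 3-vector. -/
noncomputable def normSq3 (ξ : Fin 3 → ℝ) : ℝ := ∑ k, ξ k ^ 2

/-- The symbol of the free Dirac operator, `D₀(ξ) = α·ξ + β`. -/
noncomputable def D0 (ξ : Fin 3 → ℝ) : Matrix (Fin 4) (Fin 4) ℂ := alphaDot ξ + betaM

/-- `λ₀(ξ) = √(1+|ξ|²)`. -/
noncomputable def lam0 (ξ : Fin 3 → ℝ) : ℝ := Real.sqrt (1 + normSq3 ξ)

/-- Positive-energy projector symbol `Π₀⁺(ξ)`. -/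
noncomputable def Pi0plus (ξ : Fin 3 → ℝ) : Matrix (Fin 4) (Fin 4) ℂ :=
  (1/2 : ℂ) • (1 + ((lam0 ξ : ℝ) : ℂ)⁻¹ • D0 ξ)

/-- Negative-energy projector symbol `Π₀⁻(ξ)`. -/
noncomputable def Pi0minus (ξ : Fin 3 → ℝ) : Matrix (Fin 4) (Fin 4) ℂ :=
  (1/2 : ℂ) • (1 - ((lam0 ξ : ℝ) : ℂ)⁻¹ • D0 ξ)

/-- The generator matrix `H = εδ(α·ξ) + β` of the free-Dirac step at frequency `ξ`. -/
noncomputable def freeStepH (ξ : Fin 3 → ℝ) (ε δ : ℝ) : Matrix (Fin 4) (Fin 4) ℂ :=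
  ((ε * δ : ℝ) : ℂ) • alphaDot ξ + betaM

/-- The phase `θ = Δt √(1+ε²δ²|ξ|²)/(εδ²)` of the free-Dirac step. -/
noncomputable def freeStepTheta (ξ : Fin 3 → ℝ) (ε δ Δt : ℝ) : ℝ :=
  Δt * Real.sqrt (1 + ε ^ 2 * δ ^ 2 * normSq3 ξ) / (ε * δ ^ 2)

/-!
The Dirac matrices satisfy the Clifford relations `(α^j)² = β² = 1` and pairwise
anticommute, so `H² = (1 + ε²δ²|ξ|²) • 1`. For any `A` with `A² = 1` the exponential series
splits into its even and odd parts, `exp (z • A) = cosh z • 1 + sinh z • A`; applying this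
to `A = H / √(1 + ε²δ²|ξ|²)` and `z = -iθ` gives the formula.
-/

section Exponential

variable {𝔸 : Type*} [Ring 𝔸] [Algebra ℂ 𝔸] [TopologicalSpace 𝔸] [IsTopologicalRing 𝔸]
  [ContinuousSMul ℂ 𝔸] [T2Space 𝔸]

theorem exp_smul_of_sq_eq_one {A : 𝔸} (hA : A ^ 2 = 1) (z : ℂ) :
    NormedSpace.exp (z • A) = Complex.cosh z • (1 : 𝔸) + Complex.sinh z • A := by
  rw [NormedSpace.exp_eq_tsum ℂ]
  refine HasSum.tsum_eq (HasSum.even_add_odd ?_ ?_)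
  · convert (Complex.hasSum_cosh z).smul_const (1 : 𝔸) using 2 with n
    rw [smul_pow, pow_mul A, hA, one_pow, smul_smul, div_eq_inv_mul]
  · convert (Complex.hasSum_sinh z).smul_const A using 2 with n
    rw [smul_pow, pow_succ A, pow_mul, hA, one_pow, one_mul, smul_smul, div_eq_inv_mul]

theorem exp_neg_I_mul_smul_of_sq_eq {H : 𝔸} {L : ℂ} (hL : L ≠ 0)
    (hH : H ^ 2 = L ^ 2 • (1 : 𝔸)) (t : ℂ) :
    NormedSpace.exp ((-(Complex.I * t)) • H) =
      Complex.cos (t * L) • (1 : 𝔸) - (Complex.I * (Complex.sin (t * L) / L)) • H := by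
  have hA : (L⁻¹ • H) ^ 2 = 1 := by
    rw [smul_pow, hH, smul_smul, inv_pow, inv_mul_cancel₀ (pow_ne_zero 2 hL), one_smul]
  have hscale : (-(Complex.I * t)) • H = (-(t * L) * Complex.I) • (L⁻¹ • H) := by
    rw [smul_smul]
    congr 1
    field_simp
  rw [hscale, exp_smul_of_sq_eq_one hA, Complex.cosh_mul_I, Complex.sinh_mul_I, Complex.cos_neg,
    Complex.sin_neg, smul_smul, sub_eq_add_neg, ← neg_smul]
  congr 2
  field_simp

end Exponential

section Anticommute

variable {R A : Type*} [CommRing R] [Ring A] [Algebra R A]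

theorem sq_sum_smul_of_anticommute {ι : Type*} [Fintype ι] (e : ι → A)
    (he : Pairwise fun j k => e j * e k = -(e k * e j)) (hsq : ∀ k, e k ^ 2 = 1) (a : ι → R) :
    (∑ k, a k • e k) ^ 2 = (∑ k, a k ^ 2) • (1 : A) := by
  classical
  set f : ι × ι → A := fun p => (a p.1 * a p.2) • (e p.1 * e p.2)
  have hoff : ∑ p ∈ Finset.univ.offDiag, f p = 0 := by
    refine Finset.sum_involution (fun p _ => p.swap) (fun p hp => ?_) (fun p hp _ => ?_)
      (fun p hp => by simpa [and_comm, eq_comm] using hp) (fun p _ => Prod.swap_swap p)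
    · simp only [f, Prod.fst_swap, Prod.snd_swap, mul_comm (a p.2)]
      rw [he (Finset.mem_offDiag.1 hp).2.2, smul_neg, neg_add_cancel]
    · simpa [Prod.ext_iff, eq_comm] using (Finset.mem_offDiag.1 hp).2.2
  calc (∑ k, a k • e k) ^ 2 = ∑ p ∈ Finset.univ ×ˢ Finset.univ, f p := by
        rw [Finset.sum_product, sq, Finset.sum_mul_sum]
        simp only [f, smul_mul_smul_comm]
    _ = ∑ p ∈ Finset.univ.diag, f p + ∑ p ∈ Finset.univ.offDiag, f p := by
        rw [← Finset.sum_union (Finset.disjoint_diag_offDiag _), Finset.diag_union_offDiag]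
    _ = (∑ k, a k ^ 2) • (1 : A) := by
        rw [hoff, add_zero, Finset.sum_smul, Finset.sum_diag]
        simp only [f, ← sq, hsq]

theorem sq_smul_add_of_anticommute {X B : A} {c : R} (hX : X ^ 2 = c • 1)
    (hXB : X * B = -(B * X)) (hB : B ^ 2 = 1) (s : R) :
    (s • X + B) ^ 2 = (s ^ 2 * c + 1) • (1 : A) :=
  calc (s • X + B) ^ 2 = (s * s) • X ^ 2 + s • (X * B + B * X) + B ^ 2 := by
        simp only [sq, add_mul, mul_add, smul_mul_assoc, mul_smul_comm, smul_add, smul_smul]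
        abel
    _ = (s ^ 2 * c + 1) • (1 : A) := by
        rw [hX, hXB, neg_add_cancel, hB, smul_zero, add_zero, smul_smul, add_smul, one_smul, sq]

end Anticommute

theorem Matrix.one_fin_four {α : Type*} [Zero α] [One α] :
    (1 : Matrix (Fin 4) (Fin 4) α) = !![1, 0, 0, 0; 0, 1, 0, 0; 0, 0, 1, 0; 0, 0, 0, 1] := by
  ext i j
  fin_cases i <;> fin_cases j <;> rfl

theorem alphaM_sq (k : Fin 3) : alphaM k ^ 2 = 1 := by
  fin_cases k <;> simp [alphaM, sq, Matrix.cons_mul, Matrix.vecMul_cons, Matrix.one_fin_four]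

theorem alphaM_anticommute :
    Pairwise fun j k => alphaM j * alphaM k = -(alphaM k * alphaM j) := by
  intro j k hjk
  fin_cases j <;> fin_cases k <;> (try exact absurd rfl hjk) <;>
    simp [alphaM, Matrix.cons_mul, Matrix.vecMul_cons]

theorem alphaM_mul_betaM (k : Fin 3) : alphaM k * betaM = -(betaM * alphaM k) := by
  fin_cases k <;> simp [alphaM, betaM, Matrix.cons_mul, Matrix.vecMul_cons]

theorem betaM_sq : betaM ^ 2 = 1 := by
  simp [betaM, sq, Matrix.cons_mul, Matrix.vecMul_cons, Matrix.one_fin_four]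

theorem alphaDot_sq (a : Fin 3 → ℝ) : alphaDot a ^ 2 = ((normSq3 a : ℝ) : ℂ) • 1 := by
  rw [alphaDot, sq_sum_smul_of_anticommute alphaM alphaM_anticommute alphaM_sq, normSq3]
  push_cast
  rfl

theorem alphaDot_mul_betaM (a : Fin 3 → ℝ) : alphaDot a * betaM = -(betaM * alphaDot a) := by
  simp only [alphaDot, Finset.sum_mul, Finset.mul_sum, smul_mul_assoc, mul_smul_comm,
    alphaM_mul_betaM, smul_neg, Finset.sum_neg_distrib]

theorem freeStepH_sq (ξ : Fin 3 → ℝ) (ε δ : ℝ) :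
    freeStepH ξ ε δ ^ 2 = ((1 + ε ^ 2 * δ ^ 2 * normSq3 ξ : ℝ) : ℂ) • 1 := by
  rw [freeStepH, sq_smul_add_of_anticommute (alphaDot_sq ξ) (alphaDot_mul_betaM ξ) betaM_sq]
  push_cast
  ring_nf

theorem exp_freeDirac_step_general
    (ξ : Fin 3 → ℝ) (ε δ Δt : ℝ) :
    NormedSpace.exp ((-(Complex.I * (Δt : ℂ) / ((ε * δ ^ 2 : ℝ) : ℂ))) • freeStepH ξ ε δ) =
      ((Real.cos (freeStepTheta ξ ε δ Δt) : ℝ) : ℂ) • (1 : Matrix (Fin 4) (Fin 4) ℂ) -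
        (Complex.I * ((Real.sin (freeStepTheta ξ ε δ Δt) /
          Real.sqrt (1 + ε ^ 2 * δ ^ 2 * normSq3 ξ) : ℝ) : ℂ)) • freeStepH ξ ε δ := by
  have hpos : 0 < 1 + ε ^ 2 * δ ^ 2 * normSq3 ξ := by
    have : 0 ≤ normSq3 ξ := Finset.sum_nonneg fun k _ => sq_nonneg (ξ k)
    positivity
  set L := Real.sqrt (1 + ε ^ 2 * δ ^ 2 * normSq3 ξ)
  have hL : (L : ℂ) ≠ 0 := Complex.ofReal_ne_zero.2 (Real.sqrt_pos.2 hpos).ne'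
  have hH : freeStepH ξ ε δ ^ 2 = (L : ℂ) ^ 2 • 1 := by
    rw [freeStepH_sq, ← Complex.ofReal_pow, Real.sq_sqrt hpos.le]
  have hθ : ((freeStepTheta ξ ε δ Δt : ℝ) : ℂ) = Δt / ((ε * δ ^ 2 : ℝ) : ℂ) * L := by
    rw [freeStepTheta]
    push_cast
    ring
  rw [mul_div_assoc, exp_neg_I_mul_smul_of_sq_eq hL hH, Complex.ofReal_cos, Complex.ofReal_div,
    Complex.ofReal_sin, hθ]

/-- Explicit formula for the matrix exponential of the Fourier-mode generator of the
free-Dirac step of the time-splitting scheme: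
`exp(−(iΔt/(εδ²))•H) = cos θ • I₄ − i (sin θ/√(1+ε²δ²|ξ|²)) • H`. -/
theorem exp_freeDirac_step
    (ξ : Fin 3 → ℝ) (ε δ Δt : ℝ) (hε : 0 < ε) (hδ : 0 < δ) (hΔt : 0 < Δt) :
    NormedSpace.exp ((-(Complex.I * (Δt : ℂ) / ((ε * δ ^ 2 : ℝ) : ℂ))) • freeStepH ξ ε δ) =
      ((Real.cos (freeStepTheta ξ ε δ Δt) : ℝ) : ℂ) • (1 : Matrix (Fin 4) (Fin 4) ℂ) -
        (Complex.I * ((Real.sin (freeStepTheta ξ ε δ Δt) /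
          Real.sqrt (1 + ε ^ 2 * δ ^ 2 * normSq3 ξ) : ℝ) : ℂ)) • freeStepH ξ ε δ :=
  exp_freeDirac_step_general ξ ε δ Δt
end

section
/- Let a ∈ ℝ³ with a ≠ 0, let V ∈ ℝ and t ∈ ℝ. Then the matrix exponential of the generator of the potential step of the splitting scheme satisfies exp((i t) • (α·a − V • I₄)) = e^{−iVt} • ( cos(|a| t) • I₄ + i (sin(|a| t)/|a|) • (α·a) ), and this matrix is unitary. -/
open Matrix Complex

/-!
An involution `B` yields a continuous ring homomorphism `ℂ × ℂ → 𝔸`,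
`x ↦ x.1 • (1 + B)/2 + x.2 • (1 - B)/2`, onto the span of its spectral projections; as it
commutes with `exp`, `exp (u • B) = cosh u + sinh u • B`. The anticommutation relations of the
Dirac matrices give `(α·a)² = |a|²`, so `B = (α·a)/|a|` is an involution and, `V` being central,
the potential step is `e^{-iVt} exp ((i|a|t) • B)`. It is unitary because `α·a − V` is
Hermitian, which makes the generator skew-Hermitian.
-/

theorem sum_smul_mul_self_of_anticommute {ι R A : Type*} [Fintype ι] [DecidableEq ι]
    [CommRing R] [Ring A] [Algebra R A] {e : ι → A} (he : ∀ i, e i * e i = 1)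
    (he' : Pairwise fun i j => e i * e j = -(e j * e i)) (c : ι → R) :
    (∑ i, c i • e i) * (∑ i, c i • e i) = (∑ i, c i ^ 2) • 1 := by
  simp_rw [Finset.sum_mul_sum, smul_mul_smul_comm]
  rw [← Finset.sum_product', ← Finset.diag_union_offDiag,
    Finset.sum_union (Finset.disjoint_diag_offDiag _), Finset.sum_diag, Finset.sum_smul]
  have hoff : ∑ p ∈ Finset.univ.offDiag, (c p.1 * c p.2) • (e p.1 * e p.2) = 0 := by
    refine Finset.sum_involution (fun p _ => p.swap) (fun p hp => ?_) (fun p hp _ => ?_)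
      (fun p hp => by simpa [and_comm, eq_comm] using hp) (fun p _ => rfl)
    · rw [Finset.mem_offDiag] at hp
      rw [Prod.fst_swap, Prod.snd_swap, he' hp.2.2, mul_comm (c p.2), smul_neg, neg_add_cancel]
    · rw [Finset.mem_offDiag] at hp
      simpa [Prod.ext_iff, eq_comm] using hp.2.2
  simp only [hoff, add_zero, he, sq]

namespace NormedSpace

variable {𝔸 : Type*} [NormedRing 𝔸] [NormedAlgebra ℂ 𝔸]

noncomputable def ringHomOfMulSelfEqOne {B : 𝔸} (hB : B * B = 1) : ℂ × ℂ →+* 𝔸 where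
  toFun x := (x.1 / 2) • (1 + B) + (x.2 / 2) • (1 - B)
  map_one' := by simp only [Prod.fst_one, Prod.snd_one]; module
  map_mul' x y := by
    simp only [Prod.fst_mul, Prod.snd_mul, add_mul, mul_add, sub_mul, mul_sub,
      smul_mul_smul_comm, one_mul, mul_one, hB]
    module
  map_zero' := by simp
  map_add' x y := by simp only [Prod.fst_add, Prod.snd_add]; module

theorem ringHomOfMulSelfEqOne_apply {B : 𝔸} (hB : B * B = 1) (x : ℂ × ℂ) :
    ringHomOfMulSelfEqOne hB x = (x.1 / 2) • (1 + B) + (x.2 / 2) • (1 - B) :=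
  rfl

theorem continuous_ringHomOfMulSelfEqOne {B : 𝔸} (hB : B * B = 1) :
    Continuous (ringHomOfMulSelfEqOne hB) := by
  show Continuous fun x : ℂ × ℂ => (x.1 / 2) • (1 + B) + (x.2 / 2) • (1 - B)
  fun_prop

theorem exp_smul_of_mul_self_eq_one {B : 𝔸} (hB : B * B = 1) (u : ℂ) :
    exp (u • B) = cosh u • 1 + sinh u • B := by
  let : NormedAlgebra ℚ 𝔸 := NormedAlgebra.restrictScalars ℚ ℂ 𝔸
  have hexp : exp ((u, -u) : ℂ × ℂ) = (Complex.exp u, Complex.exp (-u)) := by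
    rw [Complex.exp_eq_exp_ℂ]
    exact Prod.ext (Prod.fst_exp _) (Prod.snd_exp _)
  set φ := ringHomOfMulSelfEqOne hB
  calc exp (u • B) = exp (φ (u, -u)) := by
        rw [ringHomOfMulSelfEqOne_apply]
        congr 1
        module
    _ = φ (Complex.exp u, Complex.exp (-u)) := by
        rw [← map_exp φ (continuous_ringHomOfMulSelfEqOne hB), hexp]
    _ = cosh u • 1 + sinh u • B := by
        rw [ringHomOfMulSelfEqOne_apply, Complex.cosh, Complex.sinh]
        module

theorem exp_I_mul_smul_of_mul_self_eq {A : 𝔸} {r : ℝ} (hr : r ≠ 0)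
    (hA : A * A = ((r ^ 2 : ℝ) : ℂ) • 1) (s : ℝ) :
    exp ((I * s) • A) =
      ((Real.cos (r * s) : ℝ) : ℂ) • 1 + (I * ((Real.sin (r * s) / r : ℝ) : ℂ)) • A := by
  have hr' : (r : ℂ) ≠ 0 := ofReal_ne_zero.mpr hr
  have hB : ((r : ℂ)⁻¹ • A) * ((r : ℂ)⁻¹ • A) = 1 := by
    rw [smul_mul_smul_comm, hA, smul_smul]
    convert one_smul ℂ (1 : 𝔸) using 2
    push_cast
    field_simp
  have hsA : (I * s) • A = (((r * s : ℝ) : ℂ) * I) • ((r : ℂ)⁻¹ • A) := by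
    rw [smul_smul]
    push_cast
    field_simp
  rw [hsA, exp_smul_of_mul_self_eq_one hB, cosh_mul_I, sinh_mul_I, smul_smul, ← ofReal_cos,
    ← ofReal_sin]
  push_cast
  ring_nf

variable [CompleteSpace 𝔸]

theorem exp_sub_smul_one (X : 𝔸) (c : ℂ) : exp (X - c • 1) = Complex.exp (-c) • exp X := by
  let : NormedAlgebra ℚ 𝔸 := NormedAlgebra.restrictScalars ℚ ℂ 𝔸
  rw [sub_eq_add_neg, ← neg_smul, ← Algebra.algebraMap_eq_smul_one, add_comm,
    exp_add_of_commute (Algebra.commutes _ _), ← algebraMap_exp_comm, Complex.exp_eq_exp_ℂ,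
    Algebra.smul_def]

theorem exp_I_mul_smul_sub_smul_one {A : 𝔸} {r : ℝ} (hr : r ≠ 0)
    (hA : A * A = ((r ^ 2 : ℝ) : ℂ) • 1) (V t : ℝ) :
    exp ((I * t) • (A - (V : ℂ) • 1)) = Complex.exp (-I * V * t) •
      (((Real.cos (r * t) : ℝ) : ℂ) • 1 + (I * ((Real.sin (r * t) / r : ℝ) : ℂ)) • A) := by
  rw [smul_sub, smul_smul, exp_sub_smul_one, exp_I_mul_smul_of_mul_self_eq hr hA]
  ring_nf

end NormedSpace

theorem Matrix.exp_mem_unitaryGroup_of_mem_skewAdjoint {n : Type*} [Fintype n] [DecidableEq n]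
    {X : Matrix n n ℂ} (hX : X ∈ skewAdjoint (Matrix n n ℂ)) :
    NormedSpace.exp X ∈ unitaryGroup n ℂ := by
  rw [mem_unitaryGroup_iff, star_eq_conjTranspose, ← exp_conjTranspose, ← star_eq_conjTranspose,
    skewAdjoint.mem_iff.mp hX, ← Matrix.exp_add_of_commute _ _ (Commute.refl X).neg_right,
    add_neg_cancel, NormedSpace.exp_zero]

theorem alphaM_mul_self (k : Fin 3) : alphaM k * alphaM k = 1 := by
  fin_cases k <;> simp [alphaM, ← Matrix.ext_iff, Fin.forall_fin_succ, Matrix.one_apply]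

theorem alphaM_isHermitian (k : Fin 3) : (alphaM k).IsHermitian := by
  fin_cases k <;> simp [alphaM, Matrix.IsHermitian, ← Matrix.ext_iff, Fin.forall_fin_succ]

theorem alphaDot_mul_self (a : Fin 3 → ℝ) : alphaDot a * alphaDot a = (normSq3 a : ℂ) • 1 := by
  rw [alphaDot, sum_smul_mul_self_of_anticommute alphaM_mul_self alphaM_anticommute, normSq3]
  push_cast
  rfl

theorem isSelfAdjoint_alphaDot (a : Fin 3 → ℝ) : IsSelfAdjoint (alphaDot a) :=
  isSelfAdjoint_sum _ fun k _ => IsSelfAdjoint.smul (conj_ofReal _) (alphaM_isHermitian k)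

theorem normSq3_pos {a : Fin 3 → ℝ} (ha : a ≠ 0) : 0 < normSq3 a := by
  obtain ⟨k, hk⟩ := Function.ne_iff.mp ha
  have hk' : a k ≠ 0 := hk
  exact Finset.sum_pos' (fun j _ => sq_nonneg _) ⟨k, Finset.mem_univ k, by positivity⟩

/-- The matrix exponential of the generator of the potential step of the splitting
scheme: for `a ≠ 0`, `exp((it)•(α·a − V I₄)) =
e^{−iVt} • (cos(|a|t) • I₄ + i (sin(|a|t)/|a|) • (α·a))`, and this matrix is unitary. -/
theorem exp_potential_step_and_unitary
    (a : Fin 3 → ℝ) (ha : a ≠ 0) (V t : ℝ) :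
    NormedSpace.exp ((Complex.I * (t : ℂ)) •
        (alphaDot a - (V : ℂ) • (1 : Matrix (Fin 4) (Fin 4) ℂ))) =
      Complex.exp (-(Complex.I) * (V : ℂ) * (t : ℂ)) •
        (((Real.cos (Real.sqrt (normSq3 a) * t) : ℝ) : ℂ) • (1 : Matrix (Fin 4) (Fin 4) ℂ) +
          (Complex.I * ((Real.sin (Real.sqrt (normSq3 a) * t) /
            Real.sqrt (normSq3 a) : ℝ) : ℂ)) • alphaDot a) ∧
    NormedSpace.exp ((Complex.I * (t : ℂ)) •
        (alphaDot a - (V : ℂ) • (1 : Matrix (Fin 4) (Fin 4) ℂ)))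
      ∈ Matrix.unitaryGroup (Fin 4) ℂ := by
  let : NormedRing (Matrix (Fin 4) (Fin 4) ℂ) := Matrix.linftyOpNormedRing
  let : NormedAlgebra ℂ (Matrix (Fin 4) (Fin 4) ℂ) := Matrix.linftyOpNormedAlgebra
  have hr : Real.sqrt (normSq3 a) ≠ 0 := (Real.sqrt_pos.mpr (normSq3_pos ha)).ne'
  have hA : alphaDot a * alphaDot a = ((Real.sqrt (normSq3 a) ^ 2 : ℝ) : ℂ) • 1 := by
    rw [Real.sq_sqrt (normSq3_pos ha).le, alphaDot_mul_self]
  have hV : IsSelfAdjoint (alphaDot a - (V : ℂ) • 1) :=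
    (isSelfAdjoint_alphaDot a).sub (IsSelfAdjoint.smul (conj_ofReal V) (IsSelfAdjoint.one _))
  have hIt : I * (t : ℂ) ∈ skewAdjoint ℂ := by simp [skewAdjoint.mem_iff]
  exact ⟨NormedSpace.exp_I_mul_smul_sub_smul_one hr hA V t,
    Matrix.exp_mem_unitaryGroup_of_mem_skewAdjoint (hV.smul_mem_skewAdjoint hIt)⟩
end

section
/- Let u : ℝ × ℝ³ → ℂ⁴ and v : ℝ × ℝ³ → ℝ³ be continuously differentiable, and let n : ℝ × ℝ³ → ℝ. Suppose u satisfies pointwise the transport equation with purely imaginary zero-order term: ∂ₜu + Σ_{k=1}^3 vₖ ∂_{x_k}u + ½ (Σ_{k=1}^3 ∂_{x_k}vₖ) u = i n u. Then the density ρ := ‖u‖² satisfies the conservation law ∂ₜρ + Σ_{k=1}^3 ∂_{x_k}(vₖ ρ) = 0 at every point. -/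
/-!
Pair the transport equation with `u` in the real inner product `⟪z, w⟫_ℝ = Re (conj z * w)`.
The right-hand side drops out, since `⟪u, i n u⟫_ℝ = 0` for real `n`, and because
`∂ ‖u‖² = 2 ⟪u, ∂u⟫_ℝ`, twice the paired left-hand side is `∂ₜρ + Σₖ (∂ₖvₖ ρ + vₖ ∂ₖρ)`,
which is the conservation law after the product rule.
-/

open Function Complex
open scoped InnerProductSpace

theorem real_inner_ofReal_mul_right (z w : ℂ) (x : ℝ) : ⟪z, (x : ℂ) * w⟫_ℝ = x * ⟪z, w⟫_ℝ := by
  rw [← real_smul, real_inner_smul_right]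

theorem real_inner_I_mul_ofReal_mul_self (z : ℂ) (r : ℝ) : ⟪z, (I * r) * z⟫_ℝ = 0 := by
  rw [Complex.inner, mul_assoc, mul_conj]
  simp

theorem transport_energy_identity {ι κ : Type*} [Fintype ι] [Fintype κ]
    {w a : ι → ℂ} {b : κ → ι → ℂ} {c d : κ → ℝ} {r : ℝ}
    (h : a + ∑ k, ((c k : ℝ) : ℂ) • b k + ((1 / 2 : ℂ) * ((∑ k, d k : ℝ) : ℂ)) • w =
      (I * (r : ℂ)) • w) :
    2 * ∑ j, ⟪w j, a j⟫_ℝ +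
      ∑ k, (d k * ∑ j, ‖w j‖ ^ 2 + c k * (2 * ∑ j, ⟪w j, b k j⟫_ℝ)) = 0 := by
  have hL := congrArg (fun z : ι → ℂ => ∑ j, ⟪w j, z j⟫_ℝ) h
  have hhalf : (1 / 2 : ℂ) * ((∑ k, d k : ℝ) : ℂ) = (((∑ k, d k) / 2 : ℝ) : ℂ) := by
    push_cast; ring
  simp only [hhalf, Pi.add_apply, Finset.sum_apply, Pi.smul_apply, smul_eq_mul, inner_add_right,
    inner_sum, real_inner_ofReal_mul_right, real_inner_I_mul_ofReal_mul_self,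
    real_inner_self_eq_norm_sq, Finset.sum_add_distrib, Finset.sum_const_zero] at hL
  rw [Finset.sum_comm] at hL
  simp only [← Finset.mul_sum] at hL
  simp only [Finset.sum_add_distrib, ← Finset.sum_mul, mul_left_comm _ (2 : ℝ), ← Finset.mul_sum]
  linear_combination 2 * hL

section Calculus

variable {E F : Type*} [NormedAddCommGroup E] [NormedSpace ℝ E]
  [NormedAddCommGroup F] [NormedSpace ℝ F]

theorem HasDerivAt.sum_norm_sq {ι G : Type*} [Fintype ι] [NormedAddCommGroup G]
    [InnerProductSpace ℝ G] {f : ℝ → ι → G} {f' : ι → G} {t : ℝ} (hf : HasDerivAt f f' t) :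
    HasDerivAt (fun s => ∑ j, ‖f s j‖ ^ 2) (2 * ∑ j, ⟪f t j, f' j⟫_ℝ) t := by
  rw [Finset.mul_sum]
  exact .fun_sum fun j _ => (hasDerivAt_pi.1 hf j).norm_sq

theorem Differentiable.differentiableAt_uncurry_left {Φ : ℝ → E → F}
    (hΦ : Differentiable ℝ (uncurry Φ)) (t : ℝ) (x : E) :
    DifferentiableAt ℝ (fun s => Φ s x) t :=
  (hΦ (t, x)).comp (g := uncurry Φ) (f := fun s => (s, x)) t
    (differentiableAt_id.prodMk (differentiableAt_const x))

theorem Differentiable.differentiableAt_uncurry_update {ι : Type*} [Fintype ι] [DecidableEq ι]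
    {Φ : ℝ → (ι → ℝ) → F} (hΦ : Differentiable ℝ (uncurry Φ)) (t : ℝ) (x : ι → ℝ) (k : ι)
    (a : ℝ) : DifferentiableAt ℝ (fun s => Φ t (update x k s)) a :=
  (hΦ (t, update x k a)).comp (g := uncurry Φ) a
    ((differentiableAt_const t).prodMk (hasDerivAt_update x k a).differentiableAt)

end Calculus

/-- If `u` solves the transport equation
`∂ₜu + Σₖ vₖ ∂ₖu + ½(Σₖ ∂ₖvₖ) u = i n u` with real `n`, then the density
`ρ = ‖u‖²` satisfies the conservation law `∂ₜρ + Σₖ ∂ₖ(vₖ ρ) = 0`. -/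
theorem transport_equation_density_conservation
    (u : ℝ → (Fin 3 → ℝ) → Fin 4 → ℂ)
    (v : ℝ → (Fin 3 → ℝ) → Fin 3 → ℝ)
    (n : ℝ → (Fin 3 → ℝ) → ℝ)
    (hu : ContDiff ℝ 1 (fun p : ℝ × (Fin 3 → ℝ) => u p.1 p.2))
    (hv : ContDiff ℝ 1 (fun p : ℝ × (Fin 3 → ℝ) => v p.1 p.2))
    (htrans : ∀ t x,
      deriv (fun s => u s x) t +
        ∑ k, ((v t x k : ℝ) : ℂ) • deriv (fun s => u t (Function.update x k s)) (x k) +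
        ((1 / 2 : ℂ) *
          ((∑ k, deriv (fun s => v t (Function.update x k s) k) (x k) : ℝ) : ℂ)) • u t x =
      (Complex.I * ((n t x : ℝ) : ℂ)) • u t x) :
    ∀ t x,
      deriv (fun s => ∑ j, ‖u s x j‖ ^ 2) t +
        ∑ k, deriv (fun s =>
          v t (Function.update x k s) k *
            ∑ j, ‖u t (Function.update x k s) j‖ ^ 2) (x k) = 0 := by
  intro t x
  have hu' : Differentiable ℝ (uncurry u) := hu.differentiable one_ne_zero
  have hv' (k : Fin 3) : Differentiable ℝ (uncurry fun s y => v s y k) :=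
    differentiable_pi.1 (hv.differentiable one_ne_zero) k
  have hρ_time := (hu'.differentiableAt_uncurry_left t x).hasDerivAt.sum_norm_sq
  have hflux (k : Fin 3) := by
    simpa only [update_eq_self] using
      ((hv' k).differentiableAt_uncurry_update t x k (x k)).hasDerivAt.fun_mul
        (hu'.differentiableAt_uncurry_update t x k (x k)).hasDerivAt.sum_norm_sq
  rw [hρ_time.deriv, Finset.sum_congr rfl fun k _ => (hflux k).deriv]
  exact transport_energy_identity (htrans t x)
end
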